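/- Matsumoto's conjectured inequality is false: there exist a finite-dimensional real vector space V (one may take V = ℝ²), a Minkowski norm F on V, and nonzero vectors ξ, y ∈ V such that √(g_y(ξ,ξ)) < F(ξ), where g_y is the fundamental tensor of F at y. -/

import Mathlib

/-!
Take `F² = L`, where `L p = |p|² + x⁴ / (4 |p|²)` for `p = (x, y)`. The perturbation of the
Euclidean norm vanishes to fourth order along the `y`-axis, so the fundamental tensor at
`y = (0, 1)` is the Euclidean inner product and `|ξ|_y = 1` for `ξ = (1, 0)`, whereas
`F ξ = √5 / 2`. Strong convexity is checked on the explicit Hessian of `L`: for `p ≠ 0`,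
`2 |p|⁶ (D²L(p)(v, v) - |v|²)` is a sum of manifestly nonnegative terms.
-/

open ContinuousLinearMap

theorem HasFDerivAt.div {𝕜 E : Type*} [NontriviallyNormedField 𝕜] [NormedAddCommGroup E]
    [NormedSpace 𝕜 E] {N D : E → 𝕜} {N' D' : E →L[𝕜] 𝕜} {p : E}
    (hN : HasFDerivAt N N' p) (hD : HasFDerivAt D D' p) (hp : D p ≠ 0) :
    HasFDerivAt (fun q => N q / D q) ((D p ^ 2)⁻¹ • (D p • N' - N p • D')) p := by
  have h := hN.mul ((hasDerivAt_inv hp).comp_hasFDerivAt p hD)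
  simp only [div_eq_mul_inv]
  refine h.congr_fderiv ?_
  ext v
  simp only [Function.comp_apply, add_apply, smul_apply, smul_eq_mul, neg_mul, mul_neg, sub_apply]
  field_simp
  ring

noncomputable section

namespace Matsumoto

def linForm (a b : ℝ) : ℝ × ℝ →L[ℝ] ℝ := a • fst ℝ ℝ ℝ + b • snd ℝ ℝ ℝ

@[simp] lemma linForm_apply (a b : ℝ) (v : ℝ × ℝ) : linForm a b v = a * v.1 + b * v.2 := rfl

lemma eq_linForm {D : ℝ × ℝ →L[ℝ] ℝ} {a b : ℝ} (h₁ : D (1, 0) = a) (h₂ : D (0, 1) = b) :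
    D = linForm a b := by
  ext <;> simp [h₁, h₂]

def normSq (p : ℝ × ℝ) : ℝ := p.1 ^ 2 + p.2 ^ 2

def L (p : ℝ × ℝ) : ℝ := normSq p + p.1 ^ 4 / (4 * normSq p)

def F (p : ℝ × ℝ) : ℝ := √(L p)

def Lx (p : ℝ × ℝ) : ℝ := 2 * p.1 + p.1 ^ 3 * (p.1 ^ 2 + 2 * p.2 ^ 2) / (2 * normSq p ^ 2)

def Ly (p : ℝ × ℝ) : ℝ := 2 * p.2 - p.1 ^ 4 * p.2 / (2 * normSq p ^ 2)

def Lxx (p : ℝ × ℝ) : ℝ :=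
  2 + p.1 ^ 2 * (p.1 ^ 4 + 3 * p.1 ^ 2 * p.2 ^ 2 + 6 * p.2 ^ 4) / (2 * normSq p ^ 3)

def Lxy (p : ℝ × ℝ) : ℝ := -(2 * p.1 ^ 3 * p.2 ^ 3 / normSq p ^ 3)

def Lyy (p : ℝ × ℝ) : ℝ := 2 + p.1 ^ 4 * (3 * p.2 ^ 2 - p.1 ^ 2) / (2 * normSq p ^ 3)

lemma normSq_pos {p : ℝ × ℝ} (hp : p ≠ 0) : 0 < normSq p := by
  obtain hx | hy : p.1 ≠ 0 ∨ p.2 ≠ 0 := by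
    by_contra! h
    exact hp (Prod.ext h.1 h.2)
  all_goals unfold normSq; positivity

lemma normSq_smul (c : ℝ) (p : ℝ × ℝ) : normSq (c • p) = c ^ 2 * normSq p := by
  simp only [normSq, Prod.smul_fst, Prod.smul_snd, smul_eq_mul]
  ring

lemma L_smul (c : ℝ) (p : ℝ × ℝ) : L (c • p) = c ^ 2 * L p := by
  rcases eq_or_ne c 0 with rfl | hc
  · simp [L, normSq]
  rcases eq_or_ne p 0 with rfl | hp
  · simp [L, normSq]
  have hs := (normSq_pos hp).ne'
  simp only [L, normSq_smul, Prod.smul_fst, smul_eq_mul]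
  field_simp

lemma L_nonneg (p : ℝ × ℝ) : 0 ≤ L p := by
  unfold L normSq
  positivity

lemma L_pos {p : ℝ × ℝ} (hp : p ≠ 0) : 0 < L p := by
  have := normSq_pos hp
  unfold L
  positivity

lemma contDiffAt_L {n : WithTop ℕ∞} {p : ℝ × ℝ} (hp : p ≠ 0) : ContDiffAt ℝ n L p := by
  have hs := (normSq_pos hp).ne'
  have h : ContDiffAt ℝ n normSq p := by unfold normSq; fun_prop
  exact h.add ((contDiffAt_fst.pow 4).div (contDiffAt_const.mul h) (by positivity))

lemma F_smul (c : ℝ) (p : ℝ × ℝ) : F (c • p) = |c| * F p := by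
  rw [F, L_smul, Real.sqrt_mul (sq_nonneg c), Real.sqrt_sq_eq_abs, F]

lemma F_sq (p : ℝ × ℝ) : F p ^ 2 = L p := Real.sq_sqrt (L_nonneg p)

lemma contDiffOn_F {n : WithTop ℕ∞} : ContDiffOn ℝ n F {0}ᶜ := fun _ hp =>
  ((contDiffAt_L hp).sqrt (L_pos hp).ne').contDiffWithinAt

lemma hasFDerivAt_normSq (p : ℝ × ℝ) : HasFDerivAt normSq (linForm (2 * p.1) (2 * p.2)) p :=
  ((hasFDerivAt_fst.pow 2).add (hasFDerivAt_snd.pow 2)).congr_fderiv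
    (eq_linForm (by simp) (by simp))

lemma hasFDerivAt_L {p : ℝ × ℝ} (hp : p ≠ 0) : HasFDerivAt L (linForm (Lx p) (Ly p)) p := by
  have hs : p.1 ^ 2 + p.2 ^ 2 ≠ 0 := (normSq_pos hp).ne'
  refine ((hasFDerivAt_normSq p).add ((hasFDerivAt_fst.pow 4).div
    ((hasFDerivAt_normSq p).const_mul 4) (by positivity))).congr_fderiv (eq_linForm ?_ ?_)
  all_goals
    simp only [nsmul_eq_mul, Nat.cast_ofNat, Nat.add_one_sub_one, add_apply, sub_apply,
      smul_apply, smul_eq_mul, coe_fst', linForm_apply, Lx, Ly, normSq]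
    field_simp
    ring

lemma hasFDerivAt_Lx {p : ℝ × ℝ} (hp : p ≠ 0) : HasFDerivAt Lx (linForm (Lxx p) (Lxy p)) p := by
  have hs : p.1 ^ 2 + p.2 ^ 2 ≠ 0 := (normSq_pos hp).ne'
  have hN := ((hasFDerivAt_fst (p := p)).pow 3).mul (((hasFDerivAt_fst (p := p)).pow 2).add
    (((hasFDerivAt_snd (𝕜 := ℝ) (p := p)).pow 2).const_mul (2 : ℝ)))
  refine ((hasFDerivAt_fst.const_mul 2).add (hN.div (((hasFDerivAt_normSq p).pow 2).const_mul 2)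
    (by positivity))).congr_fderiv (eq_linForm ?_ ?_)
  all_goals
    simp only [nsmul_eq_mul, Nat.cast_ofNat, Nat.add_one_sub_one, pow_one, smul_add,
      Pi.add_apply, Pi.mul_apply, add_apply, sub_apply, smul_apply, smul_eq_mul, coe_fst',
      coe_snd', linForm_apply, Lxx, Lxy, normSq]
    field_simp
    ring

lemma hasFDerivAt_Ly {p : ℝ × ℝ} (hp : p ≠ 0) : HasFDerivAt Ly (linForm (Lxy p) (Lyy p)) p := by
  have hs : p.1 ^ 2 + p.2 ^ 2 ≠ 0 := (normSq_pos hp).ne'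
  have hN := ((hasFDerivAt_fst (p := p)).pow 4).mul (hasFDerivAt_snd (𝕜 := ℝ) (p := p))
  refine ((hasFDerivAt_snd.const_mul 2).sub (hN.div (((hasFDerivAt_normSq p).pow 2).const_mul 2)
    (by positivity))).congr_fderiv (eq_linForm ?_ ?_)
  all_goals
    simp only [nsmul_eq_mul, Nat.cast_ofNat, Nat.add_one_sub_one, pow_one, smul_add,
      Pi.mul_apply, add_apply, sub_apply, smul_apply, smul_eq_mul, coe_fst', coe_snd',
      linForm_apply, Lxy, Lyy, normSq]
    field_simp
    ring

lemma fderiv_fderiv_L_apply {y : ℝ × ℝ} (hy : y ≠ 0) (v : ℝ × ℝ) :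
    fderiv ℝ (fderiv ℝ L) y v v = Lxx y * v.1 ^ 2 + 2 * Lxy y * v.1 * v.2 + Lyy y * v.2 ^ 2 := by
  have hL : fderiv ℝ L =ᶠ[nhds y] fun z => Lx z • fst ℝ ℝ ℝ + Ly z • snd ℝ ℝ ℝ := by
    filter_upwards [isOpen_compl_singleton.mem_nhds hy] with z hz
    exact (hasFDerivAt_L hz).fderiv
  have hD : HasFDerivAt (fun z => Lx z • fst ℝ ℝ ℝ + Ly z • snd ℝ ℝ ℝ) _ y :=
    ((hasFDerivAt_Lx hy).smul_const (fst ℝ ℝ ℝ)).add ((hasFDerivAt_Ly hy).smul_const (snd ℝ ℝ ℝ))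
  rw [hL.fderiv_eq, hD.fderiv]
  simp only [add_apply, smulRight_apply, linForm_apply, smul_apply, coe_fst', smul_eq_mul,
    coe_snd']
  ring

lemma normSq_le_fderiv_fderiv_L {y : ℝ × ℝ} (hy : y ≠ 0) (v : ℝ × ℝ) :
    normSq v ≤ fderiv ℝ (fderiv ℝ L) y v v := by
  have hs := normSq_pos hy
  have key : Lxx y * v.1 ^ 2 + 2 * Lxy y * v.1 * v.2 + Lyy y * v.2 ^ 2 - normSq v =
      ((2 * normSq y ^ 3 + y.1 ^ 2 * (y.1 ^ 4 + 3 * y.1 ^ 2 * y.2 ^ 2 + 2 * y.2 ^ 4)) * v.1 ^ 2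
        + (normSq y ^ 3 + y.2 ^ 2 * (2 * y.1 ^ 4 + 3 * y.1 ^ 2 * y.2 ^ 2 + y.2 ^ 4)) * v.2 ^ 2
        + 4 * (y.1 * y.2 ^ 2 * v.1 - y.1 ^ 2 * y.2 * v.2) ^ 2) / (2 * normSq y ^ 3) := by
    simp only [Lxx, Lxy, Lyy]
    field_simp
    simp only [normSq]
    ring
  rw [fderiv_fderiv_L_apply hy, ← sub_nonneg, key]
  positivity

end Matsumoto

end

open Matsumoto in
theorem matsumoto_conjecture_false :
    ∃ F : ℝ × ℝ → ℝ,
      (∀ (c : ℝ) (y : ℝ × ℝ), 0 < c → F (c • y) = c * F y) ∧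
      (∀ y : ℝ × ℝ, y ≠ 0 → 0 < F y) ∧
      ContDiffOn ℝ 2 F {(0 : ℝ × ℝ)}ᶜ ∧
      (∀ y : ℝ × ℝ, y ≠ 0 → ∀ v : ℝ × ℝ, v ≠ 0 →
        0 < (1 / 2) * fderiv ℝ (fun z => fderiv ℝ (fun w => F w ^ 2) z) y v v) ∧
      ∃ ξ y : ℝ × ℝ, ξ ≠ 0 ∧ y ≠ 0 ∧
        Real.sqrt ((1 / 2) * fderiv ℝ (fun z => fderiv ℝ (fun w => F w ^ 2) z) y ξ ξ)
          < F ξ := by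
  refine ⟨F, fun c y hc => by rw [F_smul, abs_of_pos hc], fun y hy => Real.sqrt_pos.2 (L_pos hy),
    contDiffOn_F, fun y hy v hv => ?_, (1, 0), (0, 1), by simp, by simp, ?_⟩
  · simp only [F_sq]
    exact mul_pos one_half_pos ((normSq_pos hv).trans_le (normSq_le_fderiv_fderiv_L hy v))
  · simp only [F_sq, fderiv_fderiv_L_apply (show ((0, 1) : ℝ × ℝ) ≠ 0 by simp)]
    apply Real.sqrt_lt_sqrt <;> norm_num [Lxx, L, normSq]
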